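/- arXiv:2308.10084 — 2 statements merged into one kernel-verified Lean document; each statement's English description precedes it below -/
import Mathlib

section
/- For every complex s with Re(s) > 1, s ≠ 1, one has ∫_1^∞ (1 - A(t))·t^{-1-s} dt = 1/s - (ζ(s)/s)·(1 - 2^{-s} - 3^{-s} - 5^{-s} + 30^{-s}), where A(t) = ⌊t⌋ - ⌊t/2⌋ - ⌊t/3⌋ - ⌊t/5⌋ + ⌊t/30⌋. -/
open Finset Real ArithmeticFunction

noncomputable def M (x : ℝ) : ℝ := ∑ n ∈ Finset.Icc 1 ⌊x⌋₊, (ArithmeticFunction.moebius n : ℝ)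

noncomputable def N (x : ℝ) : ℝ := ∑ n ∈ Finset.Icc 1 ⌊x⌋₊, (ArithmeticFunction.moebius n : ℝ) * Real.log n

noncomputable def ψ (x : ℝ) : ℝ := ∑ n ∈ Finset.Icc 1 ⌊x⌋₊, Λ n

noncomputable def m (x : ℝ) : ℝ := ∑ n ∈ Finset.Icc 1 ⌊x⌋₊, (ArithmeticFunction.moebius n : ℝ) / n

noncomputable def m₁ (x : ℝ) : ℝ := m x - M x / x

noncomputable def A (t : ℝ) : ℝ :=
  (⌊t⌋ : ℝ) - (⌊t/2⌋ : ℝ) - (⌊t/3⌋ : ℝ) - (⌊t/5⌋ : ℝ) + (⌊t/30⌋ : ℝ)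

/-!
Writing `⌊t / k⌋ t ^ (-1 - s)` as the Mellin transform of `t ↦ ⌊t / k⌋` at `-s` (the integrand
vanishes on `(0, 1)` because `k ≥ 1`), the scaling rule for Mellin transforms reduces every term
to `k ^ (-s)` times the case `k = 1`, which is Abel summation for `ζ(s) = ∑ n ^ (-s)`:
`∫₁^∞ ⌊t⌋ t ^ (-1 - s) dt = ζ(s) / s`. The theorem is the linear combination with
`k = 1, 2, 3, 5, 30` together with `∫₁^∞ t ^ (-1 - s) dt = 1 / s`.
-/

open MeasureTheory Set

theorem integral_Ioi_one_mul_cpow_eq_mellin {f : ℝ → ℂ} (hf : ∀ t ∈ Set.Ioo 0 1, f t = 0)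
    (s : ℂ) : ∫ t in Ioi (1 : ℝ), f t * (t : ℂ) ^ (-1 - s) = mellin f (-s) := by
  rw [mellin, ← integral_Ici_eq_integral_Ioi,
    setIntegral_eq_of_subset_of_forall_sdiff_eq_zero measurableSet_Ioi
      (Ici_subset_Ioi.mpr one_pos) fun t ⟨ht₀, ht₁⟩ ↦ by
        rw [hf t ⟨ht₀, not_le.mp ht₁⟩, smul_zero]]
  refine setIntegral_congr_fun measurableSet_Ici fun t _ ↦ ?_
  rw [smul_eq_mul, mul_comm, show -1 - s = -s - 1 by ring]

theorem mellin_floor_neg {s : ℂ} (hs : 1 < s.re) :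
    mellin (fun t ↦ ((⌊t⌋ : ℝ) : ℂ)) (-s) = riemannZeta s / s := by
  have hcount (n : ℕ) : ∑ _ ∈ Finset.Icc 1 n, (1 : ℝ) = n := by simp
  have hAbel := LSeries_eq_mul_integral_of_nonneg (fun _ ↦ 1) zero_le_one hs
    (by simpa only [hcount, rpow_one] using Asymptotics.isBigO_refl _ _) fun _ ↦ zero_le_one
  simp only [Complex.ofReal_one, sum_const, Nat.card_Icc, add_tsub_cancel_right, nsmul_one]
    at hAbel
  rw [← integral_Ioi_one_mul_cpow_eq_mellin (fun t ht ↦ ?_),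
    eq_div_iff (Complex.ne_zero_of_one_lt_re hs), mul_comm, ← LSeries_one_eq_riemannZeta hs,
    show (1 : ℕ → ℂ) = fun _ ↦ 1 from rfl, hAbel]
  · congr 1
    refine setIntegral_congr_fun measurableSet_Ioi fun t ht ↦ ?_
    rw [← natCast_floor_eq_intCast_floor (zero_le_one.trans ht.le), Complex.ofReal_natCast,
      show -(s + 1) = -1 - s by ring]
  · rw [Int.floor_eq_zero_iff.mpr ⟨ht.1.le, ht.2⟩, Int.cast_zero, Complex.ofReal_zero]

theorem integral_Ioi_one_floor_div_mul_cpow {s : ℂ} (hs : 1 < s.re) {k : ℝ} (hk : 1 ≤ k) :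
    ∫ t in Ioi (1 : ℝ), ((⌊t / k⌋ : ℝ) : ℂ) * (t : ℂ) ^ (-1 - s)
      = (k : ℂ) ^ (-s) * (riemannZeta s / s) := by
  have hk₀ : 0 < k := one_pos.trans_le hk
  have hk_arg : (k : ℂ).arg ≠ π := by rw [Complex.arg_ofReal_of_nonneg hk₀.le]; exact pi_pos.ne
  calc ∫ t in Ioi (1 : ℝ), ((⌊t / k⌋ : ℝ) : ℂ) * (t : ℂ) ^ (-1 - s)
      = mellin (fun t ↦ ((⌊t / k⌋ : ℝ) : ℂ)) (-s) :=
        integral_Ioi_one_mul_cpow_eq_mellin (fun t ht ↦ by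
          rw [Int.floor_eq_zero_iff.mpr
              ⟨div_nonneg ht.1.le hk₀.le, (div_lt_one hk₀).mpr (ht.2.trans_le hk)⟩,
            Int.cast_zero, Complex.ofReal_zero]) s
    _ = ((k⁻¹ : ℝ) : ℂ) ^ (- -s) • mellin (fun t ↦ ((⌊t⌋ : ℝ) : ℂ)) (-s) :=
        mellin_comp_mul_right (fun t ↦ ((⌊t⌋ : ℝ) : ℂ)) (-s) (inv_pos.mpr hk₀)
    _ = (k : ℂ) ^ (-s) * (riemannZeta s / s) := by
        rw [mellin_floor_neg hs, neg_neg, smul_eq_mul, Complex.ofReal_inv,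
          Complex.inv_cpow _ _ hk_arg, ← Complex.cpow_neg]

/-- A function that is not integrable has Bochner integral `0`, and this integral is not `0`. -/
theorem integrableOn_Ioi_one_floor_div_mul_cpow {s : ℂ} (hs : 1 < s.re) {k : ℝ} (hk : 1 ≤ k) :
    IntegrableOn (fun t : ℝ ↦ ((⌊t / k⌋ : ℝ) : ℂ) * (t : ℂ) ^ (-1 - s)) (Ioi 1) := by
  have hs₀ : s ≠ 0 := Complex.ne_zero_of_one_lt_re hs
  have hk₀ : (k : ℂ) ≠ 0 := Complex.ofReal_ne_zero.mpr (one_pos.trans_le hk).ne'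
  refine .of_integral_ne_zero ?_
  rw [integral_Ioi_one_floor_div_mul_cpow hs hk]
  exact mul_ne_zero
    ((Complex.cpow_ne_zero_iff_of_exponent_ne_zero (neg_ne_zero.mpr hs₀)).mpr hk₀)
    (div_ne_zero (riemannZeta_ne_zero_of_one_lt_re hs) hs₀)

theorem stmt7_general (s : ℂ) (hs : 1 < s.re) :
    (∫ t in Set.Ioi (1:ℝ), ((1 - A t : ℝ) : ℂ) * (t : ℂ) ^ (-1 - s))
      = 1 / s - (riemannZeta s / s) *
          (1 - (2:ℂ) ^ (-s) - (3:ℂ) ^ (-s) - (5:ℂ) ^ (-s) + (30:ℂ) ^ (-s)) := by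
  have hA : ∀ t : ℝ, ((1 - A t : ℝ) : ℂ) * (t : ℂ) ^ (-1 - s) = (t : ℂ) ^ (-1 - s) -
      (((⌊t / 1⌋ : ℝ) : ℂ) * (t : ℂ) ^ (-1 - s) - ((⌊t / 2⌋ : ℝ) : ℂ) * (t : ℂ) ^ (-1 - s)
        - ((⌊t / 3⌋ : ℝ) : ℂ) * (t : ℂ) ^ (-1 - s) - ((⌊t / 5⌋ : ℝ) : ℂ) * (t : ℂ) ^ (-1 - s)
        + ((⌊t / 30⌋ : ℝ) : ℂ) * (t : ℂ) ^ (-1 - s)) := fun t ↦ by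
    simp only [A, div_one]; push_cast; ring
  have hre : (-1 - s).re < -1 := by simp; linarith
  simp only [hA]
  rw [integral_sub, integral_add, integral_sub, integral_sub, integral_sub]
  · simp (disch := norm_num) only [integral_Ioi_one_floor_div_mul_cpow hs]
    rw [integral_Ioi_cpow_of_lt hre one_pos, show -1 - s + 1 = -s by ring]
    push_cast
    rw [Complex.one_cpow, neg_div_neg_eq]
    ring
  all_goals repeat' first | apply Integrable.add | apply Integrable.sub
  all_goals first
    | exact integrableOn_Ioi_cpow_of_lt hre one_pos
    | exact integrableOn_Ioi_one_floor_div_mul_cpow hs (by norm_num)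

theorem stmt7 (s : ℂ) (hs : 1 < s.re) (hs1 : s ≠ 1) :
    (∫ t in Set.Ioi (1:ℝ), ((1 - A t : ℝ) : ℂ) * (t : ℂ) ^ (-1 - s))
      = 1 / s - (riemannZeta s / s) *
          (1 - (2:ℂ) ^ (-s) - (3:ℂ) ^ (-s) - (5:ℂ) ^ (-s) + (30:ℂ) ^ (-s)) :=
  stmt7_general s hs
end

section
/- Assume that |ψ(X) - X| ≤ 0.94·√X for all 11 ≤ X ≤ 10^19. Then for all real X with 11 ≤ X ≤ 10^19, one has -5.44 - 0.47·log X ≤ Σ_{k ≤ X} Λ(k)/√k - 2√X ≤ 0.47·log X - 1.19. -/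
open Finset Real ArithmeticFunction

/-!
Abel summation gives `∑_{k ≤ n} Λ(k)/√k = ψ(n)/√n + ∑_{k < n} ψ(k) (k^{-1/2} - (k+1)^{-1/2})`.
For `k ≥ 11` write `ψ(k) = k + E(k)` with `|E(k)| ≤ 0.94 √k`. The main part
`k (k^{-1/2} - (k+1)^{-1/2})` lies between consecutive differences of `2√(k+1) - √k` and of `√k`,
so it telescopes to `√n + O(1)`; the error part is at most `0.47 (log (k+1) - log k)`, since
`√k (k^{-1/2} - (k+1)^{-1/2}) = 1 - y` with `y = √(k/(k+1))` and `-log y ≥ 1 - y`.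
The ten terms with `k < 11`, where the hypothesis says nothing, are bounded using
`ψ(3) = log 6 < 2` and `ψ(10) = log 2520 < 8`.
-/

theorem sum_Icc_one_by_parts {R : Type*} [CommRing R] (a f : ℕ → R) (n : ℕ) :
    ∑ k ∈ Icc 1 n, a k * f k =
      (∑ j ∈ Icc 1 n, a j) * f n + ∑ k ∈ Ico 1 n, (∑ j ∈ Icc 1 k, a j) * (f k - f (k + 1)) := by
  induction n with
  | zero => simp
  | succ n ih =>
    rcases Nat.eq_zero_or_pos n with rfl | hn
    · simp
    rw [sum_Icc_succ_top (by omega), sum_Icc_succ_top (by omega), sum_Ico_succ_top hn, ih]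
    ring

theorem sum_Ico_le_of_le_sub {F : ℝ → ℝ} {u : ℕ → ℝ} {m n : ℕ} (hmn : m ≤ n)
    (h : ∀ k ∈ Ico m n, u k ≤ F (k + 1) - F k) : ∑ k ∈ Ico m n, u k ≤ F n - F m := by
  have := sum_Ico_sub (fun k : ℕ ↦ F k) hmn
  push_cast at this
  exact this ▸ sum_le_sum h

theorem sub_le_sum_Ico_of_sub_le {F : ℝ → ℝ} {u : ℕ → ℝ} {m n : ℕ} (hmn : m ≤ n)
    (h : ∀ k ∈ Ico m n, F (k + 1) - F k ≤ u k) : F n - F m ≤ ∑ k ∈ Ico m n, u k := by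
  have := sum_Ico_sub (fun k : ℕ ↦ F k) hmn
  push_cast at this
  exact this ▸ sum_le_sum h

section InvSqrtGap

variable {x : ℝ}

theorem two_mul_sqrt_mul_sqrt_add_one_le (hx : 0 ≤ x) : 2 * (√x * √(x + 1)) ≤ 2 * x + 1 := by
  nlinarith [sq_nonneg (√x - √(x + 1)), sq_sqrt hx, sq_sqrt (by linarith : 0 ≤ x + 1)]

theorem two_mul_sqrt_add_one_sub_sqrt_le_inv_sqrt (hx : 0 < x) :
    2 * (√(x + 1) - √x) ≤ (√x)⁻¹ := by
  rw [← one_div, le_div_iff₀ (sqrt_pos.2 hx)]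
  nlinarith [two_mul_sqrt_mul_sqrt_add_one_le hx.le, sq_sqrt hx.le]

theorem inv_sqrt_add_one_le_two_mul_sqrt_add_one_sub_sqrt (hx : 0 ≤ x) :
    (√(x + 1))⁻¹ ≤ 2 * (√(x + 1) - √x) := by
  rw [inv_le_iff_one_le_mul₀ (sqrt_pos.2 (by linarith))]
  nlinarith [two_mul_sqrt_mul_sqrt_add_one_le hx, sq_sqrt (by linarith : 0 ≤ x + 1)]

theorem abs_div_sqrt_sub_sqrt_le {p c : ℝ} (hx : 0 < x) (hp : |p - x| ≤ c * √x) :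
    |p / √x - √x| ≤ c := by
  have hs := sqrt_pos.2 hx
  rwa [show p / √x - √x = (p - x) / √x by rw [sub_div, Real.div_sqrt], abs_div, abs_of_pos hs,
    div_le_iff₀ hs]

noncomputable def invSqrtGap (x : ℝ) : ℝ := (√x)⁻¹ - (√(x + 1))⁻¹

theorem invSqrtGap_nonneg (hx : 0 < x) : 0 ≤ invSqrtGap x :=
  sub_nonneg.2 <| inv_anti₀ (sqrt_pos.2 hx) (sqrt_le_sqrt (by linarith))

theorem mul_invSqrtGap (hx : 0 < x) : x * invSqrtGap x = √x - √(x + 1) + (√(x + 1))⁻¹ := by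
  have := sqrt_pos.2 hx
  have := sqrt_pos.2 (by linarith : 0 < x + 1)
  unfold invSqrtGap
  field_simp
  nlinarith [sq_sqrt hx.le, sq_sqrt (by linarith : 0 ≤ x + 1)]

theorem sqrt_mul_invSqrtGap_le (hx : 0 < x) :
    √x * invSqrtGap x ≤ (Real.log (x + 1) - Real.log x) / 2 := by
  have hs := sqrt_pos.2 hx
  have ht := sqrt_pos.2 (by linarith : 0 < x + 1)
  have hlog := log_le_sub_one_of_pos (div_pos hs ht)
  rw [log_div hs.ne' ht.ne', log_sqrt hx.le, log_sqrt (by linarith)] at hlog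
  have : √x * invSqrtGap x = 1 - √x / √(x + 1) := by
    rw [invSqrtGap, mul_sub, mul_inv_cancel₀ hs.ne', div_eq_mul_inv]
  linarith

theorem abs_mul_invSqrtGap_sub_le {p c : ℝ} (hx : 0 < x) (hp : |p - x| ≤ c * √x) :
    |p * invSqrtGap x - x * invSqrtGap x| ≤ c / 2 * (Real.log (x + 1) - Real.log x) := by
  have hg := invSqrtGap_nonneg hx
  have hc : 0 ≤ c := nonneg_of_mul_nonneg_left ((abs_nonneg _).trans hp) (sqrt_pos.2 hx)
  calc |p * invSqrtGap x - x * invSqrtGap x| = |p - x| * invSqrtGap x := by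
        rw [← sub_mul, abs_mul, abs_of_nonneg hg]
    _ ≤ c * (√x * invSqrtGap x) := by rw [← mul_assoc]; exact mul_le_mul_of_nonneg_right hp hg
    _ ≤ c / 2 * (Real.log (x + 1) - Real.log x) := by
        rw [div_mul_eq_mul_div, mul_div_assoc]
        exact mul_le_mul_of_nonneg_left (sqrt_mul_invSqrtGap_le hx) hc

end InvSqrtGap

section SumInvSqrtGap

variable {p : ℕ → ℝ} {m n : ℕ}

theorem sum_Ico_mul_invSqrtGap_le_of_le {B : ℝ} (hm : 0 < m) (hmn : m ≤ n)
    (hp : ∀ k ∈ Ico m n, p k ≤ B) :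
    ∑ k ∈ Ico m n, p k * invSqrtGap k ≤ B * ((√m)⁻¹ - (√n)⁻¹) := by
  have := sum_Ico_le_of_le_sub (u := fun k ↦ p k * invSqrtGap k)
    (F := fun x ↦ -B * (√x)⁻¹) hmn fun k hk ↦ by
    have hk0 : (0 : ℝ) < k := by exact_mod_cast hm.trans_le (mem_Ico.1 hk).1
    calc p k * invSqrtGap k ≤ B * invSqrtGap k :=
          mul_le_mul_of_nonneg_right (hp k hk) (invSqrtGap_nonneg hk0)
      _ = _ := by rw [invSqrtGap]; ring
  linarith

theorem sum_Ico_mul_invSqrtGap_le {c : ℝ} (hm : 0 < m) (hmn : m ≤ n)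
    (hp : ∀ k ∈ Ico m n, |p k - k| ≤ c * √k) :
    ∑ k ∈ Ico m n, p k * invSqrtGap k ≤ √n - √m + c / 2 * (Real.log n - Real.log m) := by
  have := sum_Ico_le_of_le_sub (u := fun k ↦ p k * invSqrtGap k)
    (F := fun x ↦ √x + c / 2 * Real.log x) hmn fun k hk ↦ by
    have hk0 : (0 : ℝ) < k := by exact_mod_cast hm.trans_le (mem_Ico.1 hk).1
    have herr := abs_le.1 (abs_mul_invSqrtGap_sub_le hk0 (hp k hk))
    have := inv_sqrt_add_one_le_two_mul_sqrt_add_one_sub_sqrt hk0.le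
    linarith [mul_invSqrtGap hk0]
  linarith

theorem le_sum_Ico_mul_invSqrtGap {c : ℝ} (hm : 0 < m) (hmn : m ≤ n)
    (hp : ∀ k ∈ Ico m n, |p k - k| ≤ c * √k) :
    2 * (√(n + 1) - √(m + 1)) - (√n - √m) - c / 2 * (Real.log n - Real.log m)
      ≤ ∑ k ∈ Ico m n, p k * invSqrtGap k := by
  have := sub_le_sum_Ico_of_sub_le (u := fun k ↦ p k * invSqrtGap k)
    (F := fun x ↦ 2 * √(x + 1) - √x - c / 2 * Real.log x) hmn fun k hk ↦ by
    have hk0 : (0 : ℝ) < k := by exact_mod_cast hm.trans_le (mem_Ico.1 hk).1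
    have herr := abs_le.1 (abs_mul_invSqrtGap_sub_le hk0 (hp k hk))
    have := two_mul_sqrt_add_one_sub_sqrt_le_inv_sqrt (by linarith : (0 : ℝ) < k + 1)
    linarith [mul_invSqrtGap hk0]
  linarith

end SumInvSqrtGap

theorem le_exp_of_le_pow {a : ℝ} (n : ℕ) (h : a ≤ 2.7182818283 ^ n) : a ≤ exp n := by
  rw [← Real.exp_one_pow]
  exact h.trans (pow_le_pow_left₀ (by norm_num) exp_one_gt_d9.le n)

theorem psi_natCast (n : ℕ) : ψ n = ∑ j ∈ Icc 1 n, Λ j := by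
  simp only [ψ, Nat.floor_natCast]

theorem psi_eq_chebyshev_psi (x : ℝ) : ψ x = Chebyshev.psi x := rfl

theorem psi_le_of_lcmUpto_le_exp {n : ℕ} {B : ℝ} (h : (Nat.lcmUpto n : ℝ) ≤ exp B) : ψ n ≤ B := by
  rw [psi_eq_chebyshev_psi, Chebyshev.psi_eq_log_lcmUpto,
    log_le_iff_le_exp (mod_cast Nat.lcmUpto_pos n)]
  exact h

theorem sum_vonMangoldt_div_sqrt_eq (n : ℕ) :
    ∑ k ∈ Icc 1 n, Λ k / √k = ψ n / √n + ∑ k ∈ Ico 1 n, ψ k * invSqrtGap k := by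
  simpa [div_eq_mul_inv, psi_natCast, invSqrtGap] using
    sum_Icc_one_by_parts (fun k ↦ Λ k) (fun k ↦ (√k)⁻¹) n

theorem sum_Ico_one_eleven_psi_mul_invSqrtGap_le :
    ∑ k ∈ Ico (1 : ℕ) 11, ψ k * invSqrtGap k ≤ 2.01 := by
  have hmono {a b : ℕ} (h : a ≤ b) : ψ a ≤ ψ b := Chebyshev.psi_mono (by exact_mod_cast h)
  have hψ3 : ψ 3 ≤ 2 := by
    refine psi_le_of_lcmUpto_le_exp ?_
    rw [show Nat.lcmUpto 3 = 6 by decide]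
    exact_mod_cast le_exp_of_le_pow 2 (by norm_num)
  have hψ10 : ψ 10 ≤ 8 := by
    refine psi_le_of_lcmUpto_le_exp ?_
    rw [show Nat.lcmUpto 10 = 2520 by decide]
    exact_mod_cast le_exp_of_le_pow 8 (by norm_num)
  have h1 := sum_Ico_mul_invSqrtGap_le_of_le (p := fun k : ℕ ↦ ψ k) (B := 0) (m := 1) (n := 2)
    (by norm_num) (by norm_num) fun k hk ↦ by
      obtain rfl : k = 1 := by simpa using hk
      exact_mod_cast Chebyshev.psi_one.le
  have h2 := sum_Ico_mul_invSqrtGap_le_of_le (p := fun k : ℕ ↦ ψ k) (B := 2) (m := 2) (n := 4)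
    (by norm_num) (by norm_num) fun k hk ↦ (hmono (by simp at hk; omega : k ≤ 3)).trans hψ3
  have h3 := sum_Ico_mul_invSqrtGap_le_of_le (p := fun k : ℕ ↦ ψ k) (B := 8) (m := 4) (n := 11)
    (by norm_num) (by norm_num) fun k hk ↦ (hmono (by simp at hk; omega : k ≤ 10)).trans hψ10
  rw [← sum_Ico_consecutive _ (by norm_num : 1 ≤ 2) (by norm_num : 2 ≤ 11),
    ← sum_Ico_consecutive _ (by norm_num : 2 ≤ 4) (by norm_num : 4 ≤ 11)]
  have hs2 : (√2)⁻¹ ≤ 0.7072 := by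
    rw [inv_le_comm₀ (by positivity) (by norm_num)]
    exact le_sqrt_of_sq_le (by norm_num)
  have hs4 : √4 = 2 := by
    rw [show (4 : ℝ) = 2 ^ 2 by norm_num, sqrt_sq (by norm_num)]
  have hs11 : 0.3015 ≤ (√11)⁻¹ := by
    rw [le_inv_comm₀ (by norm_num) (by positivity)]
    exact sqrt_le_iff.2 ⟨by norm_num, by norm_num⟩
  norm_num [hs4] at h1 h2 h3 ⊢
  linarith

theorem sum_vonMangoldt_div_sqrt_bounds_of_natCast {n : ℕ} (hn : 11 ≤ n)
    (hψ : ∀ k : ℕ, 11 ≤ k → k ≤ n → |ψ k - k| ≤ 0.94 * √k) :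
    2 * √(n + 1) - 5.44 - 0.47 * Real.log n ≤ ∑ k ∈ Icc 1 n, Λ k / √k ∧
      ∑ k ∈ Icc 1 n, Λ k / √k ≤ 2 * √n + 0.47 * Real.log n - 1.19 := by
  have htail (k) (hk : k ∈ Ico 11 n) : |ψ k - k| ≤ 0.94 * √k :=
    hψ k (mem_Ico.1 hk).1 (mem_Ico.1 hk).2.le
  have hhead := abs_le.1 <| abs_div_sqrt_sub_sqrt_le (by positivity) (hψ n hn le_rfl)
  have hsmall_nonneg : 0 ≤ ∑ k ∈ Ico (1 : ℕ) 11, ψ k * invSqrtGap k :=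
    sum_nonneg fun k hk ↦ mul_nonneg (Chebyshev.psi_nonneg _)
      (invSqrtGap_nonneg (by exact_mod_cast (mem_Ico.1 hk).1))
  have hsmall := sum_Ico_one_eleven_psi_mul_invSqrtGap_le
  have htail_le := sum_Ico_mul_invSqrtGap_le (by norm_num) hn htail
  have htail_ge := le_sum_Ico_mul_invSqrtGap (by norm_num) hn htail
  have hs11 : 3.3166 ≤ √11 := le_sqrt_of_sq_le (by norm_num)
  have hs12 : √12 ≤ 3.4642 := sqrt_le_iff.2 ⟨by norm_num, by norm_num⟩
  have hlog11 : 2 ≤ Real.log 11 := by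
    rw [le_log_iff_exp_le (by norm_num)]
    calc exp 2 = exp 1 ^ 2 := by rw [← exp_nat_mul]; norm_num
      _ ≤ 2.7182818286 ^ 2 := by gcongr; exact exp_one_lt_d9.le
      _ ≤ 11 := by norm_num
  rw [sum_vonMangoldt_div_sqrt_eq, ← sum_Ico_consecutive _ (by norm_num : 1 ≤ 11) hn]
  norm_num at htail_le htail_ge
  constructor <;> linarith

theorem stmt11
    (hψ : ∀ X : ℝ, 11 ≤ X → X ≤ 10^19 → |ψ X - X| ≤ 0.94 * Real.sqrt X) :
    ∀ X : ℝ, 11 ≤ X → X ≤ 10^19 →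
      -5.44 - 0.47 * Real.log X
          ≤ (∑ k ∈ Finset.Icc 1 ⌊X⌋₊, Λ k / Real.sqrt k) - 2 * Real.sqrt X
      ∧ (∑ k ∈ Finset.Icc 1 ⌊X⌋₊, Λ k / Real.sqrt k) - 2 * Real.sqrt X
          ≤ 0.47 * Real.log X - 1.19 := by
  intro X hX11 hX19
  have hn : 11 ≤ ⌊X⌋₊ := Nat.le_floor (by exact_mod_cast hX11)
  have hnX : (⌊X⌋₊ : ℝ) ≤ X := Nat.floor_le (by linarith)
  obtain ⟨hlo, hup⟩ := sum_vonMangoldt_div_sqrt_bounds_of_natCast hn fun k hk hkn ↦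
    hψ k (by exact_mod_cast hk) (((Nat.cast_le.2 hkn).trans hnX).trans hX19)
  have hsqrt_le : √⌊X⌋₊ ≤ √X := sqrt_le_sqrt hnX
  have hsqrt_ge : √X ≤ √(⌊X⌋₊ + 1) := sqrt_le_sqrt (Nat.lt_floor_add_one X).le
  have hlog : Real.log ⌊X⌋₊ ≤ Real.log X :=
    log_le_log (by positivity : (0 : ℝ) < ⌊X⌋₊) hnX
  constructor <;> linarith
end
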